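/- In the Chevalley–Eilenberg complex of L₁ with trivial coefficients, the 2-cochain e¹ ∧ e⁴ is closed and represents a nonzero cohomology class in degree 2, weight 5 (where the weight of eⁱ¹ ∧ eⁱ² is i₁ + i₂). -/

import Mathlib

/-!
The differential preserves weight, so `d(e¹ ∧ e⁴)` lives in weight 5; but three positive
indices summing to 5 always repeat one, and the coboundary formula vanishes on repeated
indices. On the other side, the only weight-5 1-cochain is a multiple `β e⁵`, whose
coboundary is `-β (3 e¹ ∧ e⁴ + e² ∧ e³)`: matching the `e² ∧ e³` coefficient forces `β = 0`.
-/

/-- The 2-cochain `e¹ ∧ e⁴` on `L₁`, recorded by its values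
`c i j = (e¹ ∧ e⁴)(e_i, e_j)`. -/
def c (i j : ℕ) : ℚ :=
  if i = 1 ∧ j = 4 then 1 else if i = 4 ∧ j = 1 then -1 else 0

/-- `d a (e_i, e_j, e_k)` for a 2-cochain `a` on `L₁`. -/
def coboundaryTwo (a : ℕ → ℕ → ℚ) (i j k : ℕ) : ℚ :=
  -(((j : ℚ) - i) * a (i + j) k) + ((k : ℚ) - i) * a (i + k) j - ((k : ℚ) - j) * a (j + k) i

theorem coboundaryTwo_eq_zero_of_not_injective (a : ℕ → ℕ → ℚ) {i j k : ℕ}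
    (h : i = j ∨ j = k ∨ i = k) : coboundaryTwo a i j k = 0 := by
  rcases h with rfl | rfl | rfl <;> simp only [coboundaryTwo, add_comm] <;> ring

theorem coboundaryTwo_eq_zero_of_weight_ne (a : ℕ → ℕ → ℚ) {w i j k : ℕ}
    (ha : ∀ m n, m + n ≠ w → a m n = 0) (h : i + j + k ≠ w) :
    coboundaryTwo a i j k = 0 := by
  simp only [coboundaryTwo, ha (i + j) k (by omega), ha (i + k) j (by omega),
    ha (j + k) i (by omega)]
  ring

theorem c_eq_zero_of_add_ne_five {m n : ℕ} (h : m + n ≠ 5) : c m n = 0 := by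
  unfold c
  split_ifs <;> first | rfl | omega

/-- In the Chevalley–Eilenberg complex of `L₁` with trivial coefficients (basis `e_i`,
`i ≥ 1`, `[e_i,e_j] = (j-i)e_{i+j}`), the 2-cochain `e¹ ∧ e⁴` (of degree 2 and
weight `1 + 4 = 5`) is closed:
`dc(e_i,e_j,e_k) = -c([e_i,e_j],e_k) + c([e_i,e_k],e_j) - c([e_j,e_k],e_i) = 0`;
and it represents a nonzero cohomology class, i.e. it is not the coboundary of any
1-cochain `b` (where `db(e_i,e_j) = -b([e_i,e_j]) = -(j-i) b(i+j)`). -/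
theorem cocycle_g2_minus_closed_not_exact :
    (∀ i j k : ℕ, 1 ≤ i → 1 ≤ j → 1 ≤ k →
      -(((j : ℚ) - i) * c (i + j) k) + ((k : ℚ) - i) * c (i + k) j
        - ((k : ℚ) - j) * c (j + k) i = 0) ∧
    (∀ b : ℕ → ℚ, ∃ i j : ℕ, 1 ≤ i ∧ 1 ≤ j ∧ c i j ≠ -(((j : ℚ) - i) * b (i + j))) := by
  constructor
  · intro i j k hi hj hk
    change coboundaryTwo c i j k = 0
    by_cases hw : i + j + k = 5
    · exact coboundaryTwo_eq_zero_of_not_injective c (by omega)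
    · exact coboundaryTwo_eq_zero_of_weight_ne c (fun _ _ => c_eq_zero_of_add_ne_five) hw
  · intro b
    by_contra! hb
    have h14 := hb 1 4 le_rfl (by norm_num)
    have h23 := hb 2 3 (by norm_num) (by norm_num)
    norm_num [c] at h14 h23
    linarith
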